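/- arXiv:2307.05073 — 3 statements merged into one kernel-verified Lean document; each statement's English description precedes it below -/
import Mathlib

section
/- On any reflexive, transitive, strongly convergent frame, the interaction principle [B]φ → [B][K]φ is valid: for any φ : W → Prop and world w, if φ holds at all R_B-successors of w, then for every R_B-successor v of w, φ holds at all R-successors of v. -/
def RB {W : Type*} (R : W → W → Prop) (w u : W) : Prop := ∀ v, R w v → R v u

theorem RB.trans_rel {W : Type*} {R : W → W → Prop}
    (htrans : ∀ w v u, R w v → R v u → R w u) {w v u : W}
    (hv : RB R w v) (hu : R v u) : RB R w u :=
  fun x hx => htrans x v u (hv x hx) hu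

theorem B_to_BK_general {W : Type*} (R : W → W → Prop)
    (htrans : ∀ w v u, R w v → R v u → R w u)
    (φ : W → Prop) (w : W) (h : ∀ u, RB R w u → φ u) :
    ∀ v, RB R w v → ∀ u, R v u → φ u :=
  fun _ hv u hu => h u (hv.trans_rel htrans hu)

theorem B_to_BK {W : Type*} [Nonempty W] (R : W → W → Prop)
    (hrefl : ∀ w, R w w) (htrans : ∀ w v u, R w v → R v u → R w u)
    (hconv : ∀ w, ∃ u, ∀ v, R w v → R v u)
    (φ : W → Prop) (w : W) (h : ∀ u, RB R w u → φ u) :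
    ∀ v, RB R w v → ∀ u, R v u → φ u :=
  B_to_BK_general R htrans φ w h
end

section
/- There exists a reflexive, transitive, strongly convergent frame with constant domain D (with at least two elements), predicates P, Q : D → W → Prop with P(a) pointwise implying Q(a) for every a ∈ D at every world, and a world w such that [K^MS_FS] for P holds at w but [K^MS_FS] for Q fails at w. That is, the monotonicity rule (from φ → ψ valid, infer [K^MS_FS]^x φ → [K^MS_FS]^x ψ valid) is not sound on S4.2-constant-domain models. -/
/-- `[K^MS_FS]^x φ(x)` at `w`, for `φ` given as a family of world predicates indexed by `D`. -/
def KMSFS {W D : Type*} (R : W → W → Prop) (φ : D → W → Prop) (w : W) : Prop :=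
  (∃ a, ∀ v, R w v → φ a v) ∧ ∀ b, (∀ u, RB R w u → φ b u) → φ b w

section OrderTop

variable {W : Type*}

theorem rb_le_top [Preorder W] [OrderTop W] (w : W) : RB (· ≤ ·) w ⊤ :=
  fun _ _ => le_top

theorem RB.eq_top [PartialOrder W] [OrderTop W] {w u : W} (h : RB (· ≤ ·) w u) : u = ⊤ :=
  top_unique (h ⊤ le_top)

end OrderTop

theorem kmsfs_of_rigid {W D : Type*} {R : W → W → Prop} {w : W} (hconv : ∃ u, RB R w u)
    {p : D → Prop} {a : D} (ha : p a) : KMSFS R (fun b _ => p b) w :=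
  ⟨⟨a, fun _ _ => ha⟩, fun _ hb => hconv.elim hb⟩

theorem not_kmsfs_or_eq_top {W D : Type*} [PartialOrder W] [OrderTop W] {p : D → Prop}
    {b : D} (hb : ¬ p b) {w : W} (hw : w ≠ ⊤) : ¬ KMSFS (· ≤ ·) (fun a v => p a ∨ v = ⊤) w := by
  rintro ⟨-, hfix⟩
  exact (hfix b fun _ hu => Or.inr hu.eq_top).elim hb hw

theorem KMSFS_not_monotone :
    ∃ (W : Type) (R : W → W → Prop) (D : Type) (P Q : D → W → Prop) (w : W),
      (∃ a b : D, a ≠ b) ∧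
      (∀ x, R x x) ∧ (∀ x y z, R x y → R y z → R x z) ∧
      (∀ x, ∃ u, ∀ v, R x v → R v u) ∧
      (∀ (a : D) (v : W), P a v → Q a v) ∧
      ((∃ a, ∀ v, R w v → P a v) ∧ (∀ b, (∀ u, RB R w u → P b u) → P b w)) ∧
      ¬ ((∃ a, ∀ v, R w v → Q a v) ∧ (∀ b, (∀ u, RB R w u → Q b u) → Q b w)) :=
  ⟨Bool, (· ≤ ·), Bool, fun a _ => a = true, fun a v => a = true ∨ v = ⊤, ⊥,
    ⟨true, false, by decide⟩, le_refl, fun _ _ _ => le_trans,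
    fun x => ⟨⊤, rb_le_top x⟩, fun _ _ => Or.inl,
    kmsfs_of_rigid ⟨⊤, rb_le_top ⊥⟩ (p := (· = true)) rfl,
    not_kmsfs_or_eq_top (p := (· = true)) Bool.false_ne_true bot_ne_top⟩
end

section
/- On any reflexive, transitive, strongly convergent frame with constant domain D and predicate P : D → W → Prop, the formula [B]P(d) → [B][K^MS_FS] is valid; consequently so is [K^MS_FS] → [B][K^MS_FS]: if [K^MS_FS] holds at w (there is a ∈ D with P(a) at all R-successors of w, and for all b, [B]P(b) at w implies P(b) at w), then [K^MS_FS] holds at every R_B-successor of w. -/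
section RBLemmas

variable {W : Type*} {R : W → W → Prop} {w v x : W}

theorem RB.rel (hrefl : ∀ w, R w w) (h : RB R w v) : R w v :=
  h w (hrefl w)

theorem RB.rel_trans (hrefl : ∀ w, R w w) (htrans : ∀ w v u, R w v → R v u → R w u)
    (h : RB R w v) (hvx : R v x) : R w x :=
  htrans w v x (h.rel hrefl) hvx

theorem RB.refl_right (hrefl : ∀ w, R w w) (htrans : ∀ w v u, R w v → R v u → R w u)
    (h : RB R w v) : RB R v v :=
  fun _ hvx => h _ (h.rel_trans hrefl htrans hvx)

end RBLemmas

theorem KMSFS_to_B_KMSFS_general {W : Type*} {D : Type*}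
    (R : W → W → Prop) (P : D → W → Prop)
    (hrefl : ∀ w, R w w) (htrans : ∀ w v u, R w v → R v u → R w u)
    (w : W)
    (h : (∃ a, ∀ v, R w v → P a v) ∧ (∀ b, (∀ u, RB R w u → P b u) → P b w)) :
    ∀ v, RB R w v →
      ((∃ a, ∀ x, R v x → P a x) ∧ (∀ b, (∀ u, RB R v u → P b u) → P b v)) := by
  intro v hv
  obtain ⟨⟨a, ha⟩, -⟩ := h
  refine ⟨⟨a, fun x hvx => ha x (hv.rel_trans hrefl htrans hvx)⟩, fun b hb => ?_⟩
  -- `v` is one of its own `R_B`-successors, so `[B]P(b)` at `v` gives `P(b)` at `v`.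
  exact hb v (hv.refl_right hrefl htrans)

theorem KMSFS_to_B_KMSFS {W : Type*} [Nonempty W] {D : Type*} [Nonempty D]
    (R : W → W → Prop) (P : D → W → Prop)
    (hrefl : ∀ w, R w w) (htrans : ∀ w v u, R w v → R v u → R w u)
    (hconv : ∀ w, ∃ u, ∀ v, R w v → R v u)
    (w : W)
    (h : (∃ a, ∀ v, R w v → P a v) ∧ (∀ b, (∀ u, RB R w u → P b u) → P b w)) :
    ∀ v, RB R w v →
      ((∃ a, ∀ x, R v x → P a x) ∧ (∀ b, (∀ u, RB R v u → P b u) → P b v)) :=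
  KMSFS_to_B_KMSFS_general R P hrefl htrans w h
end
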